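/- Let K : [0,1] × ℝ → ℝ be continuous and 1-periodic in its second variable (K(x₁, x₂+1) = K(x₁, x₂) for all x₁ ∈ [0,1], x₂ ∈ ℝ), and suppose ∫₀¹∫₀¹ K(x₁,x₂) dx₂ dx₁ = 0. Let g ∈ C¹([0,1]) with g(0) = 1 and g(1) = 0. Then lim_{L→∞} ∫₀¹ ∫₀^L g(x₂/L) K(x₁,x₂) dx₂ dx₁ = − ∫₀¹ ∫₀¹ x₂ K(x₁,x₂) dx₂ dx₁. In particular the limit is independent of the choice of g. -/

import Mathlib

/-!
Averaging over `x₁` reduces the claim to a continuous `1`-periodic function `H` of mean zero.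
Its primitive `Q` is then `1`-periodic with `Q 0 = 0`, and the substitution `x₂ = L u` followed by
an integration by parts gives `∫₀ᴸ g(x₂/L) H(x₂) dx₂ = -∫₀¹ g'(u) Q(L u) du`. As `L → ∞`, `Q(L ·)`
converges weakly to its mean (for a polynomial weight one more integration by parts against the
bounded primitive of `Q - ∫₀¹ Q` gains a factor `1/L`; Weierstrass approximation does the rest), so
the limit is `-(g 1 - g 0) ∫₀¹ Q = ∫₀¹ Q = -∫₀¹ t H(t) dt`.
-/

open MeasureTheory Filter Set intervalIntegral Topology

theorem Function.Periodic.exists_norm_le_of_continuous {E : Type*} [SeminormedAddCommGroup E]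
    {f : ℝ → E} {c : ℝ} (hp : Function.Periodic f c) (hc : c ≠ 0) (hf : Continuous f) :
    ∃ M, ∀ x, ‖f x‖ ≤ M := by
  obtain ⟨M, hM⟩ := isBounded_iff_forall_norm_le.1 (hp.isBounded_of_continuous hc hf)
  exact ⟨M, fun x => hM _ (mem_range_self x)⟩

theorem Function.Periodic.periodic_primitive_of_integral_eq_zero {P : ℝ → ℝ} {T : ℝ}
    (hP : Continuous P) (hper : Function.Periodic P T) (hmean : ∫ t in (0:ℝ)..T, P t = 0) :
    Function.Periodic (fun u => ∫ s in (0:ℝ)..u, P s) T := fun u => by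
  dsimp only
  rw [← integral_add_adjacent_intervals (hP.intervalIntegrable 0 u) (hP.intervalIntegrable u _),
    hper.intervalIntegral_add_eq u 0, zero_add, hmean, add_zero]

theorem hasDerivAt_primitive_comp_mul {P : ℝ → ℝ} (hP : Continuous P) (L x : ℝ) :
    HasDerivAt (fun x => ∫ s in (0:ℝ)..L * x, P s) (L * P (L * x)) x := by
  simpa [mul_comm, Function.comp_def] using
    (hP.integral_hasStrictDerivAt 0 (L * x)).hasDerivAt.comp x ((hasDerivAt_id x).const_mul L)

theorem mul_integral_mul_comp_mul_eq_by_parts {P u u' : ℝ → ℝ} (hP : Continuous P)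
    (hu : ContinuousOn u (Icc 0 1)) (hu' : ∀ x ∈ Ioo (0:ℝ) 1, HasDerivAt u (u' x) x)
    (hu'int : IntervalIntegrable u' volume 0 1) (L : ℝ) :
    L * ∫ x in (0:ℝ)..1, u x * P (L * x)
      = u 1 * (∫ s in (0:ℝ)..L, P s) - ∫ x in (0:ℝ)..1, u' x * ∫ s in (0:ℝ)..L * x, P s := by
  have hQ := hasDerivAt_primitive_comp_mul hP L
  rw [← intervalIntegral.integral_const_mul]
  simp_rw [mul_left_comm L]
  rw [integral_mul_deriv_eq_deriv_mul_of_hasDerivAt (u' := u')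
    (v := fun x => ∫ s in (0:ℝ)..L * x, P s)]
  · simp
  · rwa [uIcc_of_le zero_le_one]
  · exact (continuous_iff_continuousAt.2 fun x => (hQ x).continuousAt).continuousOn
  · simpa using hu'
  · exact fun x _ => hQ x
  · exact hu'int
  · exact (continuous_const.mul (hP.comp (continuous_const_mul L))).intervalIntegrable _ _

theorem norm_integral_mul_le_of_forall_norm_le {f g : ℝ → ℝ} {A B : ℝ}
    (hf : ∀ x ∈ Icc (0:ℝ) 1, ‖f x‖ ≤ A) (hg : ∀ x ∈ Icc (0:ℝ) 1, ‖g x‖ ≤ B) :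
    ‖∫ x in (0:ℝ)..1, f x * g x‖ ≤ A * B := by
  have hA : 0 ≤ A := (norm_nonneg _).trans (hf 0 (left_mem_Icc.2 zero_le_one))
  have hfg : ∀ x ∈ uIoc (0:ℝ) 1, ‖f x * g x‖ ≤ A * B := fun x hx => by
    have hx' : x ∈ Icc (0:ℝ) 1 := Ioc_subset_Icc_self (by simpa using hx)
    rw [norm_mul]
    exact mul_le_mul (hf x hx') (hg x hx') (norm_nonneg _) hA
  simpa using intervalIntegral.norm_integral_le_of_norm_le_const hfg

theorem tendsto_integral_mul_comp_mul_of_contDiff {P f : ℝ → ℝ} (hP : Continuous P)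
    (hper : Function.Periodic P 1) (hmean : ∫ t in (0:ℝ)..1, P t = 0) (hf : ContDiff ℝ 1 f) :
    Tendsto (fun L => ∫ x in (0:ℝ)..1, f x * P (L * x)) atTop (𝓝 0) := by
  have hQper := hper.periodic_primitive_of_integral_eq_zero hP hmean
  obtain ⟨M, hM⟩ := hQper.exists_norm_le_of_continuous one_ne_zero
    (continuous_primitive (fun a b => hP.intervalIntegrable a b) 0)
  have hf' : Continuous (deriv f) := hf.continuous_deriv le_rfl
  obtain ⟨C, hC⟩ :=
    (isCompact_Icc (a := (0:ℝ)) (b := 1)).exists_bound_of_continuousOn hf'.continuousOn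
  have hbound : ∀ L > 0, ‖∫ x in (0:ℝ)..1, f x * P (L * x)‖ ≤ (‖f 1‖ * M + C * M) / L := by
    intro L hL
    have hparts := congrArg norm <| mul_integral_mul_comp_mul_eq_by_parts hP
      hf.continuous.continuousOn (fun x _ => (hf.differentiable one_ne_zero x).hasDerivAt)
      (hf'.intervalIntegrable 0 1) L
    rw [norm_mul, Real.norm_of_nonneg hL.le] at hparts
    rw [le_div_iff₀ hL, mul_comm, hparts]
    refine (norm_sub_le _ _).trans (add_le_add ?_ ?_)
    · rw [norm_mul]
      exact mul_le_mul_of_nonneg_left (hM L) (norm_nonneg _)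
    · exact norm_integral_mul_le_of_forall_norm_le hC fun x _ => hM _
  exact squeeze_zero_norm' ((eventually_gt_atTop 0).mono hbound)
    (tendsto_const_nhds.div_atTop tendsto_id)

theorem tendsto_integral_mul_comp_mul_of_integral_eq_zero {P f : ℝ → ℝ} (hP : Continuous P)
    (hper : Function.Periodic P 1) (hmean : ∫ t in (0:ℝ)..1, P t = 0)
    (hf : ContinuousOn f (Icc 0 1)) :
    Tendsto (fun L => ∫ x in (0:ℝ)..1, f x * P (L * x)) atTop (𝓝 0) := by
  obtain ⟨M, hM⟩ := hper.exists_norm_le_of_continuous one_ne_zero hP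
  rw [Metric.tendsto_nhds]
  intro ε hε
  obtain ⟨δ, hδ, hδM⟩ : ∃ δ > 0, δ * M ≤ ε / 2 := by
    refine ⟨ε / (2 * (|M| + 1)), by positivity, ?_⟩
    calc ε / (2 * (|M| + 1)) * M ≤ ε / (2 * (|M| + 1)) * (|M| + 1) := by
          gcongr; linarith [le_abs_self M]
      _ = ε / 2 := by field_simp
  obtain ⟨p, hp⟩ := exists_polynomial_near_of_continuousOn 0 1 f hf δ hδ
  have hpoly := tendsto_integral_mul_comp_mul_of_contDiff hP hper hmean
    (by simpa using p.contDiff_aeval 1)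
  filter_upwards [Metric.tendsto_nhds.1 hpoly (ε / 2) (half_pos hε)] with L hL
  have hPL : Continuous fun x => P (L * x) := hP.comp (continuous_const_mul L)
  have happrox : ‖(∫ x in (0:ℝ)..1, f x * P (L * x)) - ∫ x in (0:ℝ)..1, p.eval x * P (L * x)‖
      ≤ δ * M := by
    rw [← intervalIntegral.integral_sub]
    · simp_rw [← sub_mul]
      refine norm_integral_mul_le_of_forall_norm_le (fun x hx => ?_) fun x _ => hM _
      rw [Real.norm_eq_abs, abs_sub_comm]
      exact (hp x hx).le
    · exact (hf.mul hPL.continuousOn).intervalIntegrable_of_Icc zero_le_one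
    · exact ((p.continuous_aeval).mul hPL).intervalIntegrable 0 1
  rw [dist_zero_right] at hL ⊢
  calc _ ≤ _ := norm_le_norm_sub_add _ _
    _ < ε / 2 + ε / 2 := add_lt_add_of_le_of_lt (happrox.trans hδM) hL
    _ = ε := add_halves ε

theorem tendsto_integral_mul_comp_mul {P f : ℝ → ℝ} (hP : Continuous P)
    (hper : Function.Periodic P 1) (hf : ContinuousOn f (Icc 0 1)) :
    Tendsto (fun L => ∫ x in (0:ℝ)..1, f x * P (L * x)) atTop
      (𝓝 ((∫ x in (0:ℝ)..1, f x) * ∫ t in (0:ℝ)..1, P t)) := by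
  set m := ∫ t in (0:ℝ)..1, P t
  have hmean : ∫ t in (0:ℝ)..1, (P t - m) = 0 := by
    simp [intervalIntegral.integral_sub (hP.intervalIntegrable 0 1) intervalIntegrable_const, m]
  have hper' : Function.Periodic (fun t => P t - m) 1 := fun t => congrArg (· - m) (hper t)
  have h0 := tendsto_integral_mul_comp_mul_of_integral_eq_zero (P := fun t => P t - m)
    (hP.sub continuous_const) hper' hmean hf
  rw [← zero_add ((∫ x in (0:ℝ)..1, f x) * m)]
  refine (h0.add_const _).congr fun L => ?_
  rw [← intervalIntegral.integral_mul_const, ← intervalIntegral.integral_add]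
  · congr 1 with x
    ring
  · exact (hf.mul ((hP.comp (continuous_const_mul L)).sub continuous_const).continuousOn
      ).intervalIntegrable_of_Icc zero_le_one
  · exact (hf.intervalIntegrable_of_Icc zero_le_one).mul_const m

theorem tendsto_integral_cutoff_mul {H g : ℝ → ℝ} (hH : Continuous H)
    (hper : Function.Periodic H 1) (hmean : ∫ t in (0:ℝ)..1, H t = 0)
    (hg : ContDiffOn ℝ 1 g (Icc 0 1)) (hg0 : g 0 = 1) (hg1 : g 1 = 0) :
    Tendsto (fun L => ∫ t in (0:ℝ)..L, g (t / L) * H t) atTop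
      (𝓝 (-∫ t in (0:ℝ)..1, t * H t)) := by
  set Q := fun u => ∫ s in (0:ℝ)..u, H s
  set g' := derivWithin g (Icc 0 1)
  have hg'c : ContinuousOn g' (Icc 0 1) :=
    hg.continuousOn_derivWithin (uniqueDiffOn_Icc zero_lt_one) le_rfl
  have hg'int : IntervalIntegrable g' volume 0 1 := hg'c.intervalIntegrable_of_Icc zero_le_one
  have hgg' : ∀ x ∈ Ioo (0:ℝ) 1, HasDerivAt g (g' x) x := fun x hx =>
    (hg.differentiableOn one_ne_zero x (Ioo_subset_Icc_self hx)).hasDerivWithinAt.hasDerivAt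
      (Icc_mem_nhds hx.1 hx.2)
  have hvalue : -∫ t in (0:ℝ)..1, t * H t = ∫ u in (0:ℝ)..1, Q u := by
    have h := mul_integral_mul_comp_mul_eq_by_parts hH continuousOn_id (u' := fun _ => 1)
      (fun x _ => hasDerivAt_id x) intervalIntegrable_const 1
    simp only [one_mul, id] at h
    rw [h, hmean]
    ring
  have hrepr : ∀ L > 0,
      ∫ t in (0:ℝ)..L, g (t / L) * H t = -∫ u in (0:ℝ)..1, g' u * Q (L * u) := by
    intro L hL
    have hsub : ∫ t in (0:ℝ)..L, g (t / L) * H t = L * ∫ u in (0:ℝ)..1, g u * H (L * u) := by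
      simpa [mul_div_cancel_left₀ _ hL.ne'] using
        (mul_integral_comp_mul_left (f := fun t => g (t / L) * H t) (a := 0) (b := 1) L).symm
    rw [hsub, mul_integral_mul_comp_mul_eq_by_parts hH hg.continuousOn hgg' hg'int L, hg1,
      zero_mul, zero_sub]
  have hg'mean : ∫ u in (0:ℝ)..1, g' u = -1 := by
    rw [integral_eq_sub_of_hasDeriv_right_of_le zero_le_one hg.continuousOn
      (fun x hx => (hgg' x hx).hasDerivWithinAt) hg'int, hg0, hg1]
    norm_num
  have hweak := tendsto_integral_mul_comp_mul
    (continuous_primitive (fun a b => hH.intervalIntegrable a b) 0)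
    (hper.periodic_primitive_of_integral_eq_zero hH hmean) hg'c
  rw [hg'mean, neg_one_mul] at hweak
  rw [hvalue, ← neg_neg (∫ u in (0:ℝ)..1, Q u)]
  exact hweak.neg.congr' ((eventually_gt_atTop 0).mono fun L hL => (hrepr L hL).symm)

theorem intervalIntegral_intervalIntegral_mul_swap {K : ℝ × ℝ → ℝ} {w : ℝ → ℝ} {a b c d : ℝ}
    (hK : ContinuousOn K (uIcc a b ×ˢ uIcc c d)) (hw : ContinuousOn w (uIcc c d)) :
    ∫ x in a..b, ∫ y in c..d, w y * K (x, y) = ∫ y in c..d, w y * ∫ x in a..b, K (x, y) := by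
  have hF : ContinuousOn (fun p : ℝ × ℝ => w p.2 * K p) (uIcc a b ×ˢ uIcc c d) :=
    (hw.comp continuousOn_snd fun p hp => hp.2).mul hK
  have hint : IntegrableOn (fun p : ℝ × ℝ => w p.2 * K p) (uIoc a b ×ˢ uIoc c d) :=
    (hF.integrableOn_compact (isCompact_uIcc.prod isCompact_uIcc)).mono_set
      (prod_mono uIoc_subset_uIcc uIoc_subset_uIcc)
  rw [intervalIntegral_intervalIntegral_swap (F := fun x y => w y * K (x, y)) hint]
  simp_rw [intervalIntegral.integral_const_mul]

theorem continuous_intervalIntegral_of_continuousOn_Icc_prod_univ {K : ℝ × ℝ → ℝ} {a b : ℝ}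
    (hab : a ≤ b) (hK : ContinuousOn K (Icc a b ×ˢ univ)) :
    Continuous fun y => ∫ x in a..b, K (x, y) := by
  have hext : (fun y => ∫ x in a..b, K (x, y))
      = fun y => ∫ x in a..b, K (projIcc a b hab x, y) := funext fun y =>
    integral_congr fun x hx => by
      rw [uIcc_of_le hab] at hx
      simp [projIcc_of_mem hab hx]
  rw [hext]
  have hproj : Continuous fun p : ℝ × ℝ => ((projIcc a b hab p.2 : ℝ), p.1) :=
    (continuous_subtype_val.comp (continuous_projIcc.comp continuous_snd)).prodMk continuous_fst
  exact continuous_parametric_intervalIntegral_of_continuous'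
    (f := fun y x => K (projIcc a b hab x, y))
    (hK.comp_continuous hproj fun p => ⟨(projIcc a b hab p.2).2, mem_univ _⟩) a b

theorem edge_current_cutoff_independence
    (K : ℝ × ℝ → ℝ)
    (hKcont : ContinuousOn K ((Set.Icc (0:ℝ) 1) ×ˢ (Set.univ : Set ℝ)))
    (hKper : ∀ x₁ ∈ Set.Icc (0:ℝ) 1, ∀ x₂ : ℝ, K (x₁, x₂ + 1) = K (x₁, x₂))
    (hKavg : (∫ x₁ in (0:ℝ)..1, ∫ x₂ in (0:ℝ)..1, K (x₁, x₂)) = 0)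
    (g : ℝ → ℝ) (hg : ContDiffOn ℝ 1 g (Set.Icc (0:ℝ) 1))
    (hg0 : g 0 = 1) (hg1 : g 1 = 0) :
    Tendsto (fun L : ℝ => ∫ x₁ in (0:ℝ)..1, ∫ x₂ in (0:ℝ)..L, g (x₂ / L) * K (x₁, x₂))
      atTop (nhds (-(∫ x₁ in (0:ℝ)..1, ∫ x₂ in (0:ℝ)..1, x₂ * K (x₁, x₂)))) := by
  set H := fun x₂ => ∫ x₁ in (0:ℝ)..1, K (x₁, x₂)
  have hH : Continuous H :=
    continuous_intervalIntegral_of_continuousOn_Icc_prod_univ zero_le_one hKcont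
  have hHper : Function.Periodic H 1 := fun x₂ => integral_congr fun x₁ hx₁ =>
    hKper x₁ (by rwa [uIcc_of_le zero_le_one] at hx₁) x₂
  have hfubini : ∀ {d : ℝ} {w : ℝ → ℝ}, 0 ≤ d → ContinuousOn w (Icc 0 d) →
      ∫ x₁ in (0:ℝ)..1, ∫ x₂ in (0:ℝ)..d, w x₂ * K (x₁, x₂) = ∫ x₂ in (0:ℝ)..d, w x₂ * H x₂ :=
    fun hd hw => intervalIntegral_intervalIntegral_mul_swap
      (hKcont.mono (by rw [uIcc_of_le zero_le_one]; exact prod_mono le_rfl (subset_univ _)))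
      (by rwa [uIcc_of_le hd])
  have hHmean : ∫ x₂ in (0:ℝ)..1, H x₂ = 0 := by
    have h := hfubini zero_le_one (continuousOn_const (c := 1))
    simp only [one_mul] at h
    rw [← h, hKavg]
  rw [hfubini zero_le_one (w := fun x => x) continuousOn_id]
  refine (tendsto_integral_cutoff_mul hH hHper hHmean hg hg0 hg1).congr' ?_
  filter_upwards [eventually_gt_atTop 0] with L hL
  refine (hfubini hL.le (hg.continuousOn.comp (by fun_prop) fun x hx => ?_)).symm
  exact ⟨div_nonneg hx.1 hL.le, (div_le_one hL).2 hx.2⟩
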